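/- arXiv:2202.11619 — 2 statements merged into one kernel-verified Lean document; each statement's English description precedes it below -/
import Mathlib

section
/- Let $A_0$ and $A_1$ be two classes of continuous distribution functions with $x^*=+\infty$, and suppose there is a continuous separating distribution function $F_0$ with $x^*_{F_0}=+\infty$ such that $B(G,F_0)$ holds for every $G\in A_0$ and $B(F_0,H)$ holds for every $H\in A_1$ (possibly with different constants $\varepsilon$, $x_0$). Consider the test that rejects $\tilde H_0: F\in A_0$ whenever $R_{k,n}>1+u_{1-\alpha}/\sqrt{k}$, where $u_{1-\alpha}$ is the $(1-\alpha)$-quantile of the standard normal distribution. If $k=k(n)\to\infty$ and $k/n\to 0$, then: (a) for every $F\in A_0$ the probability of rejection tends to $0$ (in particular the test has asymptotic significance level $\alpha$); (b) for every $F\in A_1$ the probability of rejection tends to $1$ (the test is consistent). -/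
/-!
Write `Λ_F = -log (1 - F)` for the cumulative hazard of `F`. For a continuous `F` the variables
`Λ_F (X_i)` are i.i.d. standard exponential, and `k R_{k,n}(F)` is the total excess of the `k`
largest of them over the `(k+1)`-th largest. Choosing a threshold `t` with `n e^{-t} = k (1 ± η/2)`,
both the number of `Λ_F (X_i)` above `t` and their total excess over `t` have mean and variance
`O(k)`, so by Chebyshev's inequality `R_{k,n}(F) → 1` in probability.

`B(G, H)` says that `Λ_H - (1 - ε) Λ_G` is nonincreasing beyond `x₀`, hence
`R_{k,n}(H) ≤ (1 - ε) R_{k,n}(G)` as soon as `X_{(n-k)} > x₀`, an event of probability tending to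
`1` because `k/n → 0`. For `F ∈ A₀` this gives `R_{k,n}(F₀) ≲ 1 - ε`, for `F ∈ A₁` it gives
`R_{k,n}(F₀) ≳ 1/(1 - ε)`, while the critical value `1 + u/√k` tends to `1`.
-/

open MeasureTheory ProbabilityTheory Filter Set

noncomputable def orderStat (n : ℕ) (x : ℕ → ℝ) (i : ℕ) : ℝ :=
  if h : i < n then x ((Tuple.sort (fun j : Fin n => x j)) ⟨i, h⟩) else 0

noncomputable def Rstat (F0 : ℝ → ℝ) (n k : ℕ) (x : ℕ → ℝ) : ℝ :=
  Real.log (1 - F0 (orderStat n x (n - k - 1)))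
    - (1 / (k : ℝ)) * ∑ i ∈ Finset.range k, Real.log (1 - F0 (orderStat n x (n - k + i)))

def BCondition (H G : ℝ → ℝ) : Prop :=
  ∃ ε x0 : ℝ, 0 < ε ∧ ε < 1 ∧
    AntitoneOn (fun x => (1 - H x) ^ (1 - ε) / (1 - G x)) (Set.Ioi x0)

open Topology

structure IsContinuousCDFUnboundedAbove (F : ℝ → ℝ) : Prop where
  continuous : Continuous F
  monotone : Monotone F
  tendsto_atBot : Tendsto F atBot (𝓝 0)
  tendsto_atTop : Tendsto F atTop (𝓝 1)
  lt_one : ∀ x, F x < 1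

structure IsIIDSample {Ω : Type*} [MeasurableSpace Ω] (X : ℕ → Ω → ℝ) (P : Measure Ω)
    (F : ℝ → ℝ) : Prop where
  measurable : ∀ i, Measurable (X i)
  indep : iIndepFun X P
  cdf : ∀ i x, P {ω | X i ω ≤ x} = ENNReal.ofReal (F x)

noncomputable def cumHazard (F : ℝ → ℝ) (z : ℝ) : ℝ := -Real.log (1 - F z)

noncomputable def exceedCount (g : ℝ → ℝ) (t : ℝ) (n : ℕ) (x : ℕ → ℝ) : ℕ :=
  ((Finset.range n).filter fun i => t < g (x i)).card

noncomputable def excessSum (g : ℝ → ℝ) (t : ℝ) (n : ℕ) (x : ℕ → ℝ) : ℝ :=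
  ∑ i ∈ Finset.range n, max (g (x i) - t) 0

section OrderStat

variable {n : ℕ} (x : ℕ → ℝ)

lemma orderStat_of_lt {i : ℕ} (hi : i < n) :
    orderStat n x i = x (Tuple.sort (fun j : Fin n => x j) ⟨i, hi⟩) := dif_pos hi

lemma orderStat_le_orderStat {i j : ℕ} (hij : i ≤ j) (hj : j < n) :
    orderStat n x i ≤ orderStat n x j := by
  rw [orderStat_of_lt x (hij.trans_lt hj), orderStat_of_lt x hj]
  exact Tuple.monotone_sort (fun j : Fin n => x j)
    (show (⟨i, lt_of_le_of_lt hij hj⟩ : Fin n) ≤ ⟨j, hj⟩ from hij)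

lemma sum_range_orderStat {M : Type*} [AddCommMonoid M] (f : ℝ → M) :
    ∑ p ∈ Finset.range n, f (orderStat n x p) = ∑ i ∈ Finset.range n, f (x i) := by
  rw [Finset.sum_range (fun p => f (orderStat n x p)), Finset.sum_range (fun i => f (x i)),
    ← Equiv.sum_comp (Tuple.sort fun j : Fin n => x j) fun i => f (x i)]
  exact Finset.sum_congr rfl fun p _ => by rw [orderStat_of_lt x p.isLt]

lemma card_filter_orderStat_mem (S : Set ℝ) [DecidablePred (· ∈ S)] :
    ((Finset.range n).filter fun p => orderStat n x p ∈ S).card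
      = ((Finset.range n).filter fun i => x i ∈ S).card := by
  simpa only [Finset.card_filter] using sum_range_orderStat x fun z => if z ∈ S then 1 else 0

lemma IsLowerSet.orderStat_mem_iff {S : Set ℝ} (hS : IsLowerSet S) [DecidablePred (· ∈ S)]
    {j : ℕ} (hj : j < n) :
    orderStat n x j ∈ S ↔ j + 1 ≤ ((Finset.range n).filter fun i => x i ∈ S).card := by
  rw [← card_filter_orderStat_mem]
  constructor
  · intro hjS
    calc j + 1 = (Finset.range (j + 1)).card := (Finset.card_range _).symm
      _ ≤ _ := Finset.card_le_card fun p hp => by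
        have hpj := Nat.lt_succ_iff.1 (Finset.mem_range.1 hp)
        exact Finset.mem_filter.2 ⟨Finset.mem_range.2 (by omega),
          hS (orderStat_le_orderStat x hpj hj) hjS⟩
  · intro hcard
    by_contra hjS
    have hsub : ((Finset.range n).filter fun p => orderStat n x p ∈ S) ⊆ Finset.range j :=
      fun p hp => by
        obtain ⟨hpn, hpS⟩ := Finset.mem_filter.1 hp
        by_contra hpj
        exact hjS (hS (orderStat_le_orderStat x (not_lt.1 (mt Finset.mem_range.2 hpj))
          (Finset.mem_range.1 hpn)) hpS)
    have := Finset.card_le_card hsub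
    rw [Finset.card_range] at this
    omega

-- `orderStat n x (n - k - 1)` is the `(k+1)`-th largest of `x 0, …, x (n-1)`.
lemma Monotone.orderStat_le_iff_exceedCount_le {g : ℝ → ℝ} (hg : Monotone g) {k : ℕ}
    (hkn : k < n) (t : ℝ) :
    g (orderStat n x (n - k - 1)) ≤ t ↔ exceedCount g t n x ≤ k := by
  have hS : IsLowerSet {z | g z ≤ t} := fun _ _ hba ha => (hg hba).trans ha
  have hsplit := Finset.card_filter_add_card_filter_not (s := Finset.range n)
    (p := fun i => g (x i) ≤ t)
  simp only [not_le, Finset.card_range] at hsplit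
  rw [show g (orderStat n x (n - k - 1)) ≤ t ↔ orderStat n x (n - k - 1) ∈ {z | g z ≤ t}
    from Iff.rfl, hS.orderStat_mem_iff x (by omega), exceedCount]
  simp only [Set.mem_ofPred_eq]
  omega

end OrderStat

section HillStatistic

variable {n k : ℕ}

lemma Rstat_eq_sum_cumHazard_sub_div (F : ℝ → ℝ) (hk : k ≠ 0) (x : ℕ → ℝ) :
    Rstat F n k x = (∑ i ∈ Finset.range k,
      (cumHazard F (orderStat n x (n - k + i)) - cumHazard F (orderStat n x (n - k - 1)))) / k := by
  have hk' : (k : ℝ) ≠ 0 := Nat.cast_ne_zero.2 hk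
  simp only [Rstat, cumHazard, Finset.sum_sub_distrib, Finset.sum_const, Finset.card_range,
    nsmul_eq_mul, Finset.sum_neg_distrib]
  field_simp
  ring

lemma excessSum_anti (g : ℝ → ℝ) (n : ℕ) (x : ℕ → ℝ) : Antitone fun t => excessSum g t n x :=
  fun _ _ hab => Finset.sum_le_sum fun _ _ => max_le_max (by linarith) le_rfl

lemma natCast_mul_Rstat_eq_excessSum {F : ℝ → ℝ} (hF : Monotone (cumHazard F)) (hk : k ≠ 0)
    (hkn : k < n) (x : ℕ → ℝ) :
    k * Rstat F n k x
      = excessSum (cumHazard F) (cumHazard F (orderStat n x (n - k - 1))) n x := by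
  obtain ⟨m, rfl⟩ : ∃ m, n = m + k := ⟨n - k, by omega⟩
  rw [Rstat_eq_sum_cumHazard_sub_div F hk, mul_div_cancel₀ _ (Nat.cast_ne_zero.2 hk), excessSum]
  simp only [Nat.add_sub_cancel]
  rw [← sum_range_orderStat x fun z =>
    max (cumHazard F z - cumHazard F (orderStat (m + k) x (m - 1))) 0]
  have hlow : ∑ p ∈ Finset.range m,
      max (cumHazard F (orderStat (m + k) x p) - cumHazard F (orderStat (m + k) x (m - 1))) 0 = 0 :=
    Finset.sum_eq_zero fun p hp => max_eq_right <| sub_nonpos.2 <|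
      hF (orderStat_le_orderStat x (by have := Finset.mem_range.1 hp; omega) (by omega))
  rw [Finset.sum_range_add, hlow, zero_add]
  exact Finset.sum_congr rfl fun i hi => (max_eq_left <| sub_nonneg.2 <|
    hF (orderStat_le_orderStat x (by omega) (by have := Finset.mem_range.1 hi; omega))).symm

lemma natCast_mul_Rstat_le_excessSum {F : ℝ → ℝ} (hF : Monotone (cumHazard F)) (hk : k ≠ 0)
    (hkn : k < n) {x : ℕ → ℝ} {t : ℝ} (h : k < exceedCount (cumHazard F) t n x) :
    k * Rstat F n k x ≤ excessSum (cumHazard F) t n x := by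
  rw [natCast_mul_Rstat_eq_excessSum hF hk hkn]
  exact excessSum_anti _ _ _ (not_le.1 fun hT =>
    h.not_ge ((hF.orderStat_le_iff_exceedCount_le x hkn t).1 hT)).le

lemma excessSum_le_natCast_mul_Rstat {F : ℝ → ℝ} (hF : Monotone (cumHazard F)) (hk : k ≠ 0)
    (hkn : k < n) {x : ℕ → ℝ} {t : ℝ} (h : exceedCount (cumHazard F) t n x ≤ k) :
    excessSum (cumHazard F) t n x ≤ k * Rstat F n k x := by
  rw [natCast_mul_Rstat_eq_excessSum hF hk hkn]
  exact excessSum_anti _ _ _ ((hF.orderStat_le_iff_exceedCount_le x hkn t).2 h)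

lemma cumHazard_sub_le_of_antitoneOn {G H : ℝ → ℝ} {ε x0 : ℝ}
    (hanti : AntitoneOn (fun x => (1 - G x) ^ (1 - ε) / (1 - H x)) (Ioi x0))
    (hG : ∀ x, G x < 1) (hH : ∀ x, H x < 1) {a b : ℝ} (ha : x0 < a) (hab : a ≤ b) :
    cumHazard H b - cumHazard H a ≤ (1 - ε) * (cumHazard G b - cumHazard G a) := by
  have hGa : 0 < 1 - G a := sub_pos.2 (hG a)
  have hGb : 0 < 1 - G b := sub_pos.2 (hG b)
  have hHa : 0 < 1 - H a := sub_pos.2 (hH a)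
  have hHb : 0 < 1 - H b := sub_pos.2 (hH b)
  have h := Real.log_le_log (by positivity) (hanti ha (ha.trans_le hab) hab)
  rw [Real.log_div (by positivity) hHb.ne', Real.log_div (by positivity) hHa.ne',
    Real.log_rpow hGb, Real.log_rpow hGa] at h
  simp only [cumHazard]
  linarith

lemma Rstat_le_mul_Rstat_of_antitoneOn {G H : ℝ → ℝ} {ε x0 : ℝ}
    (hanti : AntitoneOn (fun x => (1 - G x) ^ (1 - ε) / (1 - H x)) (Ioi x0))
    (hG : ∀ x, G x < 1) (hH : ∀ x, H x < 1) (hk : k ≠ 0) (hkn : k ≤ n) {x : ℕ → ℝ}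
    (hT : x0 < orderStat n x (n - k - 1)) :
    Rstat H n k x ≤ (1 - ε) * Rstat G n k x := by
  rw [Rstat_eq_sum_cumHazard_sub_div H hk, Rstat_eq_sum_cumHazard_sub_div G hk, mul_div_assoc',
    Finset.mul_sum]
  gcongr with i hi
  rw [Finset.mem_range] at hi
  exact cumHazard_sub_le_of_antitoneOn hanti hG hH hT
    (orderStat_le_orderStat x (by omega) (by omega))

end HillStatistic

section Moments

variable {Ω : Type*} [MeasurableSpace Ω] {P : Measure Ω}

lemma lintegral_Ioi_ofReal_exp_neg :
    ∫⁻ s in Ioi (0 : ℝ), ENNReal.ofReal (Real.exp (-s)) = 1 := by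
  have hint : IntegrableOn (fun s : ℝ => Real.exp (-s)) (Ioi 0) := by
    simpa using exp_neg_integrableOn_Ioi 0 one_pos
  rw [← ofReal_integral_eq_lintegral_ofReal hint (ae_of_all _ fun s => (Real.exp_pos _).le),
    integral_exp_neg_Ioi_zero, ENNReal.ofReal_one]

lemma lintegral_Ioi_ofReal_exp_neg_mul_self :
    ∫⁻ s in Ioi (0 : ℝ), ENNReal.ofReal (Real.exp (-s) * s) = 1 := by
  have hGamma : ∀ s ∈ Ioi (0 : ℝ), Real.exp (-s) * s ^ ((2 : ℝ) - 1) = Real.exp (-s) * s :=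
    fun s _ => by norm_num
  rw [← ofReal_integral_eq_lintegral_ofReal
      ((Real.GammaIntegral_convergent two_pos).congr_fun hGamma measurableSet_Ioi)
      ((ae_restrict_iff' measurableSet_Ioi).2 (ae_of_all _ fun s hs =>
        mul_nonneg (Real.exp_pos _).le (le_of_lt hs))),
    ← setIntegral_congr_fun measurableSet_Ioi hGamma, ← Real.Gamma_eq_integral two_pos,
    Real.Gamma_two, ENNReal.ofReal_one]

variable {W : Ω → ℝ} {c : ℝ}

lemma lintegral_ofReal_eq_of_meas_lt (hW : Measurable W) (hW0 : 0 ≤ W) (hc : 0 ≤ c)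
    (htail : ∀ s > 0, P {ω | s < W ω} = ENNReal.ofReal (c * Real.exp (-s))) :
    ∫⁻ ω, ENNReal.ofReal (W ω) ∂P = ENNReal.ofReal c := by
  rw [lintegral_eq_lintegral_meas_lt P (ae_of_all _ hW0) hW.aemeasurable,
    setLIntegral_congr_fun measurableSet_Ioi fun s hs => by rw [htail s hs, ENNReal.ofReal_mul hc],
    lintegral_const_mul' _ _ ENNReal.ofReal_ne_top, lintegral_Ioi_ofReal_exp_neg, mul_one]

lemma lintegral_ofReal_sq_eq_of_meas_lt (hW : Measurable W) (hW0 : 0 ≤ W) (hc : 0 ≤ c)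
    (htail : ∀ s > 0, P {ω | s < W ω} = ENNReal.ofReal (c * Real.exp (-s))) :
    ∫⁻ ω, ENNReal.ofReal (W ω ^ 2) ∂P = ENNReal.ofReal (2 * c) := by
  have hsq : ∀ w : ℝ, ∫ s in (0 : ℝ)..w, 2 * s = w ^ 2 := fun w => by
    rw [intervalIntegral.integral_const_mul, integral_id]; ring
  have key := lintegral_comp_eq_lintegral_meas_lt_mul P (g := fun s => 2 * s)
    (ae_of_all _ hW0) hW.aemeasurable (fun _ _ => (continuous_const_mul 2).intervalIntegrable _ _)
    ((ae_restrict_iff' measurableSet_Ioi).2 (ae_of_all _ fun s hs => by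
      simp only [mem_Ioi] at hs; positivity))
  simp only [hsq] at key
  calc ∫⁻ ω, ENNReal.ofReal (W ω ^ 2) ∂P
      = ∫⁻ s in Ioi (0 : ℝ), ENNReal.ofReal (2 * c) * ENNReal.ofReal (Real.exp (-s) * s) := by
        rw [key]
        refine setLIntegral_congr_fun measurableSet_Ioi fun s hs => ?_
        rw [htail s hs, ← ENNReal.ofReal_mul (by positivity), ← ENNReal.ofReal_mul (by positivity)]
        ring_nf
    _ = ENNReal.ofReal (2 * c) := by
        rw [lintegral_const_mul' _ _ ENNReal.ofReal_ne_top, lintegral_Ioi_ofReal_exp_neg_mul_self,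
          mul_one]

lemma memLp_two_of_meas_lt (hW : Measurable W) (hW0 : 0 ≤ W) (hc : 0 ≤ c)
    (htail : ∀ s > 0, P {ω | s < W ω} = ENNReal.ofReal (c * Real.exp (-s))) :
    MemLp W 2 P := by
  rw [memLp_two_iff_integrable_sq hW.aestronglyMeasurable]
  refine ⟨(hW.pow_const 2).aestronglyMeasurable, ?_⟩
  rw [hasFiniteIntegral_iff_ofReal (ae_of_all _ fun ω => sq_nonneg (W ω)),
    lintegral_ofReal_sq_eq_of_meas_lt hW hW0 hc htail]
  exact ENNReal.ofReal_lt_top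

lemma integral_eq_of_meas_lt (hW : Measurable W) (hW0 : 0 ≤ W) (hc : 0 ≤ c)
    (htail : ∀ s > 0, P {ω | s < W ω} = ENNReal.ofReal (c * Real.exp (-s))) :
    ∫ ω, W ω ∂P = c := by
  rw [integral_eq_lintegral_of_nonneg_ae (ae_of_all _ hW0) hW.aestronglyMeasurable,
    lintegral_ofReal_eq_of_meas_lt hW hW0 hc htail, ENNReal.toReal_ofReal hc]

lemma variance_le_of_meas_lt [IsProbabilityMeasure P] (hW : Measurable W) (hW0 : 0 ≤ W)
    (hc : 0 ≤ c) (htail : ∀ s > 0, P {ω | s < W ω} = ENNReal.ofReal (c * Real.exp (-s))) :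
    variance W P ≤ 2 * c := by
  refine (variance_le_expectation_sq hW.aestronglyMeasurable).trans_eq ?_
  simp only [Pi.pow_apply]
  rw [integral_eq_lintegral_of_nonneg_ae (ae_of_all _ fun ω => sq_nonneg (W ω))
    (hW.pow_const 2).aestronglyMeasurable, lintegral_ofReal_sq_eq_of_meas_lt hW hW0 hc htail,
    ENNReal.toReal_ofReal (by positivity)]

end Moments

section Concentration

variable {Ω : Type*} [MeasurableSpace Ω] {P : Measure Ω} [IsProbabilityMeasure P]

lemma meas_ge_abs_sum_sub_le {Y : ℕ → Ω → ℝ} (hindep : iIndepFun Y P) {m v : ℝ}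
    (hmem : ∀ i, MemLp (Y i) 2 P) (hmean : ∀ i, ∫ ω, Y i ω ∂P = m)
    (hvar : ∀ i, variance (Y i) P ≤ v) (n : ℕ) {c : ℝ} (hc : 0 < c) :
    P {ω | c ≤ |∑ i ∈ Finset.range n, Y i ω - n * m|} ≤ ENNReal.ofReal (n * v / c ^ 2) := by
  have hsum : MemLp (∑ i ∈ Finset.range n, Y i) 2 P := memLp_finsetSum' _ fun i _ => hmem i
  have hmean_sum : ∫ ω, (∑ i ∈ Finset.range n, Y i) ω ∂P = n * m := by
    simp only [Finset.sum_apply]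
    rw [integral_finsetSum _ fun i _ => (hmem i).integrable one_le_two]
    simp [hmean]
  have hvar_sum : variance (∑ i ∈ Finset.range n, Y i) P ≤ n * v := by
    rw [IndepFun.variance_sum (fun i _ => hmem i) fun i _ j _ hij => hindep.indepFun hij]
    simpa using Finset.sum_le_sum fun i (_ : i ∈ Finset.range n) => hvar i
  calc P {ω | c ≤ |∑ i ∈ Finset.range n, Y i ω - n * m|}
      = P {ω | c ≤ |(∑ i ∈ Finset.range n, Y i) ω - ∫ ω, (∑ i ∈ Finset.range n, Y i) ω ∂P|} := by
        rw [hmean_sum]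
        simp only [Finset.sum_apply]
    _ ≤ ENNReal.ofReal (variance (∑ i ∈ Finset.range n, Y i) P / c ^ 2) :=
        meas_ge_le_variance_div_sq hsum hc
    _ ≤ ENNReal.ofReal (n * v / c ^ 2) := ENNReal.ofReal_le_ofReal (by gcongr)

lemma meas_ge_abs_card_filter_sub_le {X : ℕ → Ω → ℝ} (hXm : ∀ i, Measurable (X i))
    (hindep : iIndepFun X P) {S : Set ℝ} (hS : MeasurableSet S) [DecidablePred (· ∈ S)] {p : ℝ}
    (hp : ∀ i, P.real (X i ⁻¹' S) = p) (n : ℕ) {c : ℝ} (hc : 0 < c) :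
    P {ω | c ≤ |(((Finset.range n).filter fun i => X i ω ∈ S).card : ℝ) - n * p|}
      ≤ ENNReal.ofReal (n * p / c ^ 2) := by
  have hXS : ∀ i, MeasurableSet (X i ⁻¹' S) := fun i => hXm i hS
  set Y : ℕ → Ω → ℝ := fun i => (X i ⁻¹' S).indicator 1
  have hmean : ∀ i, ∫ ω, Y i ω ∂P = p := fun i => by rw [integral_indicator_one (hXS i), hp]
  have hmem : ∀ i, MemLp (Y i) 2 P := fun i =>
    memLp_indicator_const 2 (hXS i) 1 (Or.inr (measure_ne_top _ _))
  have hvar : ∀ i, variance (Y i) P ≤ p := fun i => by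
    refine (variance_le_expectation_sq (hmem i).aestronglyMeasurable).trans_eq ?_
    rw [← hmean i]
    congr 1 with ω
    by_cases h : ω ∈ X i ⁻¹' S <;> simp [Y, h]
  have hindepY : iIndepFun Y P :=
    hindep.comp (fun _ => S.indicator 1) fun _ => measurable_one.indicator hS
  convert meas_ge_abs_sum_sub_le hindepY hmem hmean hvar n hc using 6 with ω
  rw [Finset.card_filter, Nat.cast_sum]
  refine congrArg (· - _) (Finset.sum_congr rfl fun i _ => ?_)
  by_cases h : X i ω ∈ S <;> simp [Y, h]

end Concentration

lemma eventually_natCast_mul_lt {k : ℕ → ℕ} (hkn : Tendsto (fun n => (k n : ℝ) / n) atTop (𝓝 0))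
    {a : ℝ} (ha : 0 < a) : ∀ᶠ n in atTop, (k n : ℝ) * a < n := by
  filter_upwards [hkn.eventually_lt_const (inv_pos.2 ha), eventually_gt_atTop 0] with n h hn
  rw [div_lt_iff₀ (Nat.cast_pos.2 hn)] at h
  calc (k n : ℝ) * a < a⁻¹ * n * a := mul_lt_mul_of_pos_right h ha
    _ = n := by field_simp

lemma tendsto_zero_of_eventually_le_ofReal_div {ι : Type*} {l : Filter ι} {f : ι → ENNReal}
    {g : ι → ℝ} (hg : Tendsto g l atTop) (C : ℝ)
    (h : ∀ᶠ i in l, f i ≤ ENNReal.ofReal (C / g i)) : Tendsto f l (𝓝 0) := by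
  have hC : Tendsto (fun i => ENNReal.ofReal (C / g i)) l (𝓝 0) := by
    simpa using ENNReal.tendsto_ofReal (tendsto_const_nhds.div_atTop hg)
  exact tendsto_of_tendsto_of_tendsto_of_le_of_le' tendsto_const_nhds hC
    (Eventually.of_forall fun _ => zero_le) h

lemma tendsto_div_sqrt_natCast {k : ℕ → ℕ} (hk : Tendsto k atTop atTop) (u : ℝ) :
    Tendsto (fun n => u / Real.sqrt (k n)) atTop (𝓝 0) :=
  tendsto_const_nhds.div_atTop (Real.tendsto_sqrt_atTop.comp (tendsto_natCast_atTop_atTop.comp hk))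

section Limits

variable {Ω : Type*} [MeasurableSpace Ω] {P : Measure Ω}

lemma tendsto_measure_of_eventually_subset_union {ι : Type*} {l : Filter ι} {E A B : ι → Set Ω}
    (h : ∀ᶠ i in l, E i ⊆ A i ∪ B i) (hA : Tendsto (fun i => P (A i)) l (𝓝 0))
    (hB : Tendsto (fun i => P (B i)) l (𝓝 0)) : Tendsto (fun i => P (E i)) l (𝓝 0) := by
  have hAB := hA.add hB
  rw [add_zero] at hAB
  refine tendsto_of_tendsto_of_tendsto_of_le_of_le' tendsto_const_nhds hAB
    (Eventually.of_forall fun _ => zero_le) ?_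
  filter_upwards [h] with i hi using (measure_mono hi).trans (measure_union_le _ _)

lemma tendsto_measure_of_tendsto_measure_compl [IsProbabilityMeasure P] {ι : Type*}
    {l : Filter ι} {E : ι → Set Ω} (h : Tendsto (fun i => P (E i)ᶜ) l (𝓝 0)) :
    Tendsto (fun i => P (E i)) l (𝓝 1) := by
  have h1 : Tendsto (fun i => 1 - P (E i)ᶜ) l (𝓝 1) := by
    simpa using ENNReal.Tendsto.sub tendsto_const_nhds h (Or.inl ENNReal.one_ne_top)
  refine tendsto_of_tendsto_of_tendsto_of_le_of_le h1 tendsto_const_nhds (fun i => ?_)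
    fun _ => prob_le_one
  rw [tsub_le_iff_right, ← measure_univ (μ := P)]
  exact measure_univ_le_add_compl _

end Limits

lemma exists_pos_mul_exp_neg_eq {a b : ℝ} (ha : 0 < a) (hab : a < b) :
    ∃ t > 0, b * Real.exp (-t) = a :=
  have hb : b ≠ 0 := (ha.trans hab).ne'
  ⟨Real.log (b / a), Real.log_pos ((one_lt_div ha).2 hab), by
    rw [Real.exp_neg, Real.exp_log (div_pos (ha.trans hab) ha)]; field_simp⟩

namespace IsContinuousCDFUnboundedAbove

variable {F : ℝ → ℝ}

lemma nonneg (hF : IsContinuousCDFUnboundedAbove F) (x : ℝ) : 0 ≤ F x :=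
  hF.monotone.le_of_tendsto hF.tendsto_atBot x

lemma monotone_cumHazard (hF : IsContinuousCDFUnboundedAbove F) : Monotone (cumHazard F) :=
  fun _ _ hab => neg_le_neg <| Real.log_le_log (sub_pos.2 (hF.lt_one _))
    (sub_le_sub_left (hF.monotone hab) 1)

lemma continuous_cumHazard (hF : IsContinuousCDFUnboundedAbove F) : Continuous (cumHazard F) :=
  ((continuous_const.sub hF.continuous).log fun x => (sub_pos.2 (hF.lt_one x)).ne').neg

lemma exists_eq_and_setOf_le_eq_Iic (hF : IsContinuousCDFUnboundedAbove F) {s : ℝ} (hs0 : 0 < s)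
    (hs1 : s < 1) : ∃ x, F x = s ∧ {z | F z ≤ s} = Iic x := by
  obtain ⟨a, ha⟩ := (hF.tendsto_atBot.eventually_lt_const hs0).exists
  obtain ⟨b, hb⟩ := (hF.tendsto_atTop.eventually_const_lt hs1).exists
  obtain ⟨c, hc⟩ := intermediate_value_univ a b hF.continuous ⟨ha.le, hb.le⟩
  set S := {z | F z ≤ s}
  have hbdd : BddAbove S := ⟨b, fun z hz => not_lt.1 fun hbz => (hz.trans_lt hb).not_ge
    (hF.monotone hbz.le)⟩
  have hsup : sSup S ∈ S :=
    (isClosed_le hF.continuous continuous_const).csSup_mem ⟨c, hc.le⟩ hbdd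
  refine ⟨sSup S, le_antisymm hsup (hc ▸ hF.monotone (le_csSup hbdd hc.le)), ?_⟩
  ext z
  exact ⟨fun hz => le_csSup hbdd hz, fun hz => (hF.monotone hz).trans hsup⟩

end IsContinuousCDFUnboundedAbove

namespace IsIIDSample

variable {Ω : Type*} [MeasurableSpace Ω] {P : Measure Ω} [IsProbabilityMeasure P]
  {X : ℕ → Ω → ℝ} {F : ℝ → ℝ} {k : ℕ → ℕ}

lemma meas_lt_cumHazard (hX : IsIIDSample X P F) (hF : IsContinuousCDFUnboundedAbove F) (i : ℕ)
    {t : ℝ} (ht : 0 < t) :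
    P {ω | t < cumHazard F (X i ω)} = ENNReal.ofReal (Real.exp (-t)) := by
  have hexp : Real.exp (-t) < 1 := Real.exp_lt_one_iff.2 (neg_lt_zero.2 ht)
  obtain ⟨x, hFx, hIic⟩ := hF.exists_eq_and_setOf_le_eq_Iic (s := 1 - Real.exp (-t))
    (by linarith) (by linarith [Real.exp_pos (-t)])
  have hset : {ω | t < cumHazard F (X i ω)} = {ω | X i ω ≤ x}ᶜ := by
    ext ω
    have hpos : 0 < 1 - F (X i ω) := sub_pos.2 (hF.lt_one _)
    have hmem : F (X i ω) ≤ 1 - Real.exp (-t) ↔ X i ω ≤ x := Set.ext_iff.1 hIic (X i ω)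
    simp only [mem_ofPred_eq, mem_compl_iff, ← hmem, cumHazard, not_le, lt_neg,
      Real.log_lt_iff_lt_exp hpos]
    constructor <;> intro h <;> linarith
  rw [hset, prob_compl_eq_one_sub
    (show MeasurableSet {ω | X i ω ≤ x} from hX.measurable i measurableSet_Iic), hX.cdf, hFx,
    ← ENNReal.ofReal_one, ← ENNReal.ofReal_sub _ (by linarith [Real.exp_pos (-t)]), sub_sub_cancel]

lemma meas_ge_abs_exceedCount_sub_le (hX : IsIIDSample X P F)
    (hF : IsContinuousCDFUnboundedAbove F) {t : ℝ} (ht : 0 < t) (n : ℕ) {c : ℝ} (hc : 0 < c) :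
    P {ω | c ≤ |(exceedCount (cumHazard F) t n (X · ω) : ℝ) - n * Real.exp (-t)|}
      ≤ ENNReal.ofReal (n * Real.exp (-t) / c ^ 2) := by
  have hS : MeasurableSet {z | t < cumHazard F z} :=
    measurableSet_lt measurable_const hF.continuous_cumHazard.measurable
  have hp : ∀ i, P.real (X i ⁻¹' {z | t < cumHazard F z}) = Real.exp (-t) := fun i => by
    rw [measureReal_def, preimage_ofPred_eq, hX.meas_lt_cumHazard hF i ht,
      ENNReal.toReal_ofReal (Real.exp_pos _).le]
  exact meas_ge_abs_card_filter_sub_le hX.measurable hX.indep hS hp n hc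

lemma meas_ge_abs_excessSum_sub_le (hX : IsIIDSample X P F)
    (hF : IsContinuousCDFUnboundedAbove F) {t : ℝ} (ht : 0 < t) (n : ℕ) {c : ℝ} (hc : 0 < c) :
    P {ω | c ≤ |excessSum (cumHazard F) t n (X · ω) - n * Real.exp (-t)|}
      ≤ ENNReal.ofReal (n * (2 * Real.exp (-t)) / c ^ 2) := by
  set φ : ℝ → ℝ := fun z => max (cumHazard F z - t) 0
  have hφ : Measurable φ :=
    ((hF.continuous_cumHazard.sub continuous_const).max continuous_const).measurable
  have hW : ∀ i, Measurable (φ ∘ X i) := fun i => hφ.comp (hX.measurable i)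
  have hW0 : ∀ i, 0 ≤ φ ∘ X i := fun i ω => le_max_right _ _
  have htail : ∀ i, ∀ s > 0, P {ω | s < (φ ∘ X i) ω}
      = ENNReal.ofReal (Real.exp (-t) * Real.exp (-s)) := fun i s hs => by
    have hset : {ω | s < (φ ∘ X i) ω} = {ω | t + s < cumHazard F (X i ω)} := by
      ext ω
      simp only [mem_ofPred_eq, Function.comp_apply, φ, lt_max_iff]
      constructor
      · rintro (h | h) <;> linarith
      · intro h; left; linarith
    rw [hset, hX.meas_lt_cumHazard hF i (by positivity), ← Real.exp_add, neg_add]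
  have hc0 : 0 ≤ Real.exp (-t) := (Real.exp_pos _).le
  exact meas_ge_abs_sum_sub_le (hX.indep.comp (fun _ => φ) fun _ => hφ)
    (fun i => memLp_two_of_meas_lt (hW i) (hW0 i) hc0 (htail i))
    (fun i => integral_eq_of_meas_lt (hW i) (hW0 i) hc0 (htail i))
    (fun i => variance_le_of_meas_lt (hW i) (hW0 i) hc0 (htail i)) n hc

lemma meas_exceedCount_or_excessSum_deviates_le (hX : IsIIDSample X P F)
    (hF : IsContinuousCDFUnboundedAbove F) {t : ℝ} (ht : 0 < t) (n : ℕ) {c : ℝ} (hc : 0 < c) :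
    P ({ω | c ≤ |(exceedCount (cumHazard F) t n (X · ω) : ℝ) - n * Real.exp (-t)|}
        ∪ {ω | c ≤ |excessSum (cumHazard F) t n (X · ω) - n * Real.exp (-t)|})
      ≤ ENNReal.ofReal (3 * (n * Real.exp (-t)) / c ^ 2) := by
  refine (measure_union_le _ _).trans <|
    (add_le_add (hX.meas_ge_abs_exceedCount_sub_le hF ht n hc)
      (hX.meas_ge_abs_excessSum_sub_le hF ht n hc)).trans_eq ?_
  rw [← ENNReal.ofReal_add (by positivity) (by positivity)]
  ring_nf

lemma meas_one_add_le_Rstat_le (hX : IsIIDSample X P F) (hF : IsContinuousCDFUnboundedAbove F)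
    {η : ℝ} (hη : 0 < η) {n k : ℕ} (hk : k ≠ 0) (hkn : k * (1 + η / 2) < n) :
    P {ω | 1 + η ≤ Rstat F n k (X · ω)} ≤ ENNReal.ofReal (12 * (1 + η / 2) / η ^ 2 / k) := by
  have hk0 : (0 : ℝ) < k := Nat.cast_pos.2 (Nat.pos_of_ne_zero hk)
  have hkn' : k < n := by exact_mod_cast (show (k : ℝ) < n by nlinarith)
  obtain ⟨t, ht, hnt⟩ := exists_pos_mul_exp_neg_eq (by positivity) hkn
  have hc : 0 < k * η / 2 := by positivity
  refine (measure_mono fun ω (hω : 1 + η ≤ _) => ?_).trans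
    ((hX.meas_exceedCount_or_excessSum_deviates_le hF ht n hc).trans_eq ?_)
  · rw [mem_union, mem_ofPred_eq, mem_ofPred_eq, hnt]
    by_cases hN : exceedCount (cumHazard F) t n (X · ω) ≤ k
    · have : (exceedCount (cumHazard F) t n (X · ω) : ℝ) ≤ k := by exact_mod_cast hN
      exact Or.inl (le_abs.2 (Or.inr (by linarith)))
    · have := natCast_mul_Rstat_le_excessSum hF.monotone_cumHazard hk hkn' (not_le.1 hN)
      exact Or.inr (le_abs.2 (Or.inl (by nlinarith)))
  · rw [hnt]
    congr 1
    field_simp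
    ring

lemma meas_Rstat_le_one_sub_le (hX : IsIIDSample X P F) (hF : IsContinuousCDFUnboundedAbove F)
    {η : ℝ} (hη : 0 < η) (hη2 : η < 2) {n k : ℕ} (hk : k ≠ 0) (hkn : k < n) :
    P {ω | Rstat F n k (X · ω) ≤ 1 - η} ≤ ENNReal.ofReal (12 * (1 - η / 2) / η ^ 2 / k) := by
  have hk0 : (0 : ℝ) < k := Nat.cast_pos.2 (Nat.pos_of_ne_zero hk)
  have hkn' : (k : ℝ) * (1 - η / 2) < n :=
    lt_of_le_of_lt (by nlinarith) (show (k : ℝ) < n by exact_mod_cast hkn)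
  obtain ⟨t, ht, hnt⟩ := exists_pos_mul_exp_neg_eq (by nlinarith) hkn'
  have hc : 0 < k * η / 2 := by positivity
  refine (measure_mono fun ω (hω : _ ≤ 1 - η) => ?_).trans
    ((hX.meas_exceedCount_or_excessSum_deviates_le hF ht n hc).trans_eq ?_)
  · rw [mem_union, mem_ofPred_eq, mem_ofPred_eq, hnt]
    by_cases hN : k ≤ exceedCount (cumHazard F) t n (X · ω)
    · have : (k : ℝ) ≤ exceedCount (cumHazard F) t n (X · ω) := by exact_mod_cast hN
      exact Or.inl (le_abs.2 (Or.inl (by linarith)))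
    · have := excessSum_le_natCast_mul_Rstat hF.monotone_cumHazard hk hkn (not_le.1 hN).le
      exact Or.inr (le_abs.2 (Or.inr (by nlinarith)))
  · rw [hnt]
    congr 1
    field_simp
    ring

lemma meas_orderStat_le_le (hX : IsIIDSample X P F) (hF : IsContinuousCDFUnboundedAbove F)
    (x0 : ℝ) {n k : ℕ} (hn : n ≠ 0) (hk : (k : ℝ) ≤ n * (1 - F x0) / 2) :
    P {ω | orderStat n (X · ω) (n - k - 1) ≤ x0}
      ≤ ENNReal.ofReal (4 * F x0 / (1 - F x0) ^ 2 / n) := by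
  have hn0 : (0 : ℝ) < n := Nat.cast_pos.2 (Nat.pos_of_ne_zero hn)
  have h1p : 0 < 1 - F x0 := sub_pos.2 (hF.lt_one x0)
  have hc : 0 < n * (1 - F x0) / 2 := by positivity
  have hp : ∀ i, P.real (X i ⁻¹' Iic x0) = F x0 := fun i => by
    rw [measureReal_def, show X i ⁻¹' Iic x0 = {ω | X i ω ≤ x0} from rfl, hX.cdf,
      ENNReal.toReal_ofReal (hF.nonneg x0)]
  refine (measure_mono fun ω (hω : orderStat n (X · ω) (n - k - 1) ≤ x0) => ?_).trans
    ((meas_ge_abs_card_filter_sub_le hX.measurable hX.indep measurableSet_Iic hp n hc).trans_eq ?_)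
  · have hcard := (isLowerSet_Iic x0).orderStat_mem_iff (X · ω) (j := n - k - 1) (by omega) |>.1 hω
    have : (n : ℝ) ≤ ((Finset.range n).filter fun i => X i ω ∈ Iic x0).card + k := by
      exact_mod_cast (show n ≤ _ + k by omega)
    rw [mem_ofPred_eq]
    refine le_abs.2 (Or.inl ?_)
    nlinarith [hF.nonneg x0]
  · congr 1
    field_simp
    ring

theorem tendsto_meas_one_add_le_Rstat (hX : IsIIDSample X P F)
    (hF : IsContinuousCDFUnboundedAbove F) (hk : Tendsto k atTop atTop)
    (hkn : Tendsto (fun n => (k n : ℝ) / n) atTop (𝓝 0)) {η : ℝ} (hη : 0 < η) :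
    Tendsto (fun n => P {ω | 1 + η ≤ Rstat F n (k n) (X · ω)}) atTop (𝓝 0) :=
  tendsto_zero_of_eventually_le_ofReal_div (tendsto_natCast_atTop_atTop.comp hk) _ <| by
    filter_upwards [hk.eventually_ne_atTop 0, eventually_natCast_mul_lt hkn
      (a := 1 + η / 2) (by positivity)] with n hk0 hkn
    exact hX.meas_one_add_le_Rstat_le hF hη hk0 hkn

theorem tendsto_meas_Rstat_le_one_sub (hX : IsIIDSample X P F)
    (hF : IsContinuousCDFUnboundedAbove F) (hk : Tendsto k atTop atTop)
    (hkn : Tendsto (fun n => (k n : ℝ) / n) atTop (𝓝 0)) {η : ℝ} (hη : 0 < η) (hη2 : η < 2) :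
    Tendsto (fun n => P {ω | Rstat F n (k n) (X · ω) ≤ 1 - η}) atTop (𝓝 0) :=
  tendsto_zero_of_eventually_le_ofReal_div (tendsto_natCast_atTop_atTop.comp hk) _ <| by
    filter_upwards [hk.eventually_ne_atTop 0, eventually_natCast_mul_lt hkn one_pos]
      with n hk0 hkn
    exact hX.meas_Rstat_le_one_sub_le hF hη hη2 hk0 (by simpa using hkn)

theorem tendsto_meas_orderStat_le (hX : IsIIDSample X P F) (hF : IsContinuousCDFUnboundedAbove F)
    (hkn : Tendsto (fun n => (k n : ℝ) / n) atTop (𝓝 0)) (x0 : ℝ) :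
    Tendsto (fun n => P {ω | orderStat n (X · ω) (n - k n - 1) ≤ x0}) atTop (𝓝 0) := by
  have h1p : 0 < 1 - F x0 := sub_pos.2 (hF.lt_one x0)
  refine tendsto_zero_of_eventually_le_ofReal_div tendsto_natCast_atTop_atTop
    (4 * F x0 / (1 - F x0) ^ 2) ?_
  filter_upwards [eventually_natCast_mul_lt hkn (div_pos two_pos h1p), eventually_ne_atTop 0]
    with n hkn hn
  refine hX.meas_orderStat_le_le hF x0 hn ?_
  rw [mul_div_assoc', div_lt_iff₀ h1p] at hkn
  linarith

theorem tendsto_meas_reject_of_BCondition_left (hX : IsIIDSample X P F)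
    (hF : IsContinuousCDFUnboundedAbove F) {F0 : ℝ → ℝ} (hF0 : ∀ x, F0 x < 1)
    (hB : BCondition F F0) (u : ℝ) (hk : Tendsto k atTop atTop)
    (hkn : Tendsto (fun n => (k n : ℝ) / n) atTop (𝓝 0)) :
    Tendsto (fun n => P {ω | 1 + u / Real.sqrt (k n) < Rstat F0 n (k n) (X · ω)})
      atTop (𝓝 0) := by
  obtain ⟨ε, x0, hε, hε1, hanti⟩ := hB
  have hδ : (1 - ε) * (1 + ε / (2 * (1 - ε))) = 1 - ε / 2 := by
    field_simp [(sub_pos.2 hε1).ne']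
    ring
  refine tendsto_measure_of_eventually_subset_union ?_ (hX.tendsto_meas_orderStat_le hF hkn x0)
    (hX.tendsto_meas_one_add_le_Rstat hF hk hkn (η := ε / (2 * (1 - ε))) (by
      have := sub_pos.2 hε1; positivity))
  filter_upwards [hk.eventually_ne_atTop 0, eventually_natCast_mul_lt hkn one_pos,
    (tendsto_div_sqrt_natCast hk u).eventually_const_lt (neg_lt_zero.2 (half_pos hε))]
    with n hk0 hkn1 hun ω hω
  by_cases hT : orderStat n (X · ω) (n - k n - 1) ≤ x0
  · exact Or.inl hT
  have hkn' : k n < n := by simpa using hkn1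
  have hcomp := Rstat_le_mul_Rstat_of_antitoneOn hanti hF.lt_one hF0 hk0 hkn'.le (not_le.1 hT)
  have hrej : 1 + u / Real.sqrt (k n) < Rstat F0 n (k n) (X · ω) := hω
  have hlt : (1 - ε) * (1 + ε / (2 * (1 - ε))) < (1 - ε) * Rstat F n (k n) (X · ω) :=
    calc (1 - ε) * (1 + ε / (2 * (1 - ε))) = 1 - ε / 2 := hδ
      _ < 1 + u / Real.sqrt (k n) := by linarith
      _ < Rstat F0 n (k n) (X · ω) := hrej
      _ ≤ (1 - ε) * Rstat F n (k n) (X · ω) := hcomp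
  exact Or.inr (lt_of_mul_lt_mul_left hlt (sub_pos.2 hε1).le).le

theorem tendsto_meas_reject_of_BCondition_right (hX : IsIIDSample X P F)
    (hF : IsContinuousCDFUnboundedAbove F) {F0 : ℝ → ℝ} (hF0 : ∀ x, F0 x < 1)
    (hB : BCondition F0 F) (u : ℝ) (hk : Tendsto k atTop atTop)
    (hkn : Tendsto (fun n => (k n : ℝ) / n) atTop (𝓝 0)) :
    Tendsto (fun n => P {ω | 1 + u / Real.sqrt (k n) < Rstat F0 n (k n) (X · ω)})
      atTop (𝓝 1) := by
  obtain ⟨ε, x0, hε, hε1, hanti⟩ := hB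
  have hδ : (1 - ε) * (1 + ε / (2 * (1 - ε))) = 1 - ε / 2 := by
    field_simp [(sub_pos.2 hε1).ne']
    ring
  refine tendsto_measure_of_tendsto_measure_compl <| tendsto_measure_of_eventually_subset_union ?_
    (hX.tendsto_meas_orderStat_le hF hkn x0)
    (hX.tendsto_meas_Rstat_le_one_sub hF hk hkn (η := ε / 2) (half_pos hε) (by linarith))
  filter_upwards [hk.eventually_ne_atTop 0, eventually_natCast_mul_lt hkn one_pos,
    (tendsto_div_sqrt_natCast hk u).eventually_lt_const
      (show 0 < ε / (2 * (1 - ε)) by have := sub_pos.2 hε1; positivity)]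
    with n hk0 hkn1 hun ω hω
  by_cases hT : orderStat n (X · ω) (n - k n - 1) ≤ x0
  · exact Or.inl hT
  have hkn' : k n < n := by simpa using hkn1
  have hcomp := Rstat_le_mul_Rstat_of_antitoneOn hanti hF0 hF.lt_one hk0 hkn'.le (not_le.1 hT)
  have hacc : Rstat F0 n (k n) (X · ω) ≤ 1 + u / Real.sqrt (k n) := not_lt.1 hω
  refine Or.inr <| calc
    Rstat F n (k n) (X · ω) ≤ (1 - ε) * Rstat F0 n (k n) (X · ω) := hcomp
    _ ≤ (1 - ε) * (1 + ε / (2 * (1 - ε))) := by gcongr; linarith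
    _ = 1 - ε / 2 := hδ

end IsIIDSample

theorem test_significance_and_consistency_general
    (A0 A1 : Set (ℝ → ℝ))
    (hA0 : ∀ G ∈ A0, Continuous G ∧ Monotone G ∧ Tendsto G atBot (nhds 0) ∧
      Tendsto G atTop (nhds 1) ∧ ∀ x, G x < 1)
    (hA1 : ∀ H ∈ A1, Continuous H ∧ Monotone H ∧ Tendsto H atBot (nhds 0) ∧
      Tendsto H atTop (nhds 1) ∧ ∀ x, H x < 1)
    (F0 : ℝ → ℝ)
    (hF0lt : ∀ x, F0 x < 1)
    (hsep0 : ∀ G ∈ A0, BCondition G F0) (hsep1 : ∀ H ∈ A1, BCondition F0 H)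
    (u : ℝ)
    (k : ℕ → ℕ) (hk : Tendsto k atTop atTop)
    (hkn : Tendsto (fun n => (k n : ℝ) / n) atTop (nhds 0)) :
    (∀ F ∈ A0, ∀ (Ω : Type) (_ : MeasurableSpace Ω) (P : Measure Ω), IsProbabilityMeasure P →
      ∀ (X : ℕ → Ω → ℝ), (∀ i, Measurable (X i)) →
        iIndepFun X P →
        (∀ i x, P {ω | X i ω ≤ x} = ENNReal.ofReal (F x)) →
        Tendsto
          (fun n => P {ω | 1 + u / Real.sqrt (k n) < Rstat F0 n (k n) (fun i => X i ω)})
          atTop (nhds 0)) ∧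
    (∀ F ∈ A1, ∀ (Ω : Type) (_ : MeasurableSpace Ω) (P : Measure Ω), IsProbabilityMeasure P →
      ∀ (X : ℕ → Ω → ℝ), (∀ i, Measurable (X i)) →
        iIndepFun X P →
        (∀ i x, P {ω | X i ω ≤ x} = ENNReal.ofReal (F x)) →
        Tendsto
          (fun n => P {ω | 1 + u / Real.sqrt (k n) < Rstat F0 n (k n) (fun i => X i ω)})
          atTop (nhds 1)) := by
  refine ⟨fun F hF Ω _ P _ X hXm hindep hcdf => ?_, fun F hF Ω _ P _ X hXm hindep hcdf => ?_⟩
  · obtain ⟨hc, hm, hbot, htop, hlt⟩ := hA0 F hF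
    exact IsIIDSample.tendsto_meas_reject_of_BCondition_left ⟨hXm, hindep, hcdf⟩
      ⟨hc, hm, hbot, htop, hlt⟩ hF0lt (hsep0 F hF) u hk hkn
  · obtain ⟨hc, hm, hbot, htop, hlt⟩ := hA1 F hF
    exact IsIIDSample.tendsto_meas_reject_of_BCondition_right ⟨hXm, hindep, hcdf⟩
      ⟨hc, hm, hbot, htop, hlt⟩ hF0lt (hsep1 F hF) u hk hkn

/-- Corollary 1. Let `A₀`, `A₁` be two classes of continuous distribution
functions with `x* = +∞` separated by a continuous distribution function `F₀` with
`x*_{F₀} = +∞`, i.e. `B(G, F₀)` for all `G ∈ A₀` and `B(F₀, H)` for all `H ∈ A₁`.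
For the test rejecting `H̃₀ : F ∈ A₀` when `R_{k,n} > 1 + u_{1-α}/√k`, if `k = k(n) → ∞` and
`k/n → 0`, then (a) for every `F ∈ A₀` the rejection probability tends to `0` (in particular the
test has asymptotic significance level `α`), and (b) for every `F ∈ A₁` the rejection probability
tends to `1` (the test is consistent). -/
theorem test_significance_and_consistency
    (A0 A1 : Set (ℝ → ℝ))
    (hA0 : ∀ G ∈ A0, Continuous G ∧ Monotone G ∧ Tendsto G atBot (nhds 0) ∧
      Tendsto G atTop (nhds 1) ∧ ∀ x, G x < 1)
    (hA1 : ∀ H ∈ A1, Continuous H ∧ Monotone H ∧ Tendsto H atBot (nhds 0) ∧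
      Tendsto H atTop (nhds 1) ∧ ∀ x, H x < 1)
    (F0 : ℝ → ℝ) (hF0cont : Continuous F0) (hF0mono : Monotone F0)
    (hF0bot : Tendsto F0 atBot (nhds 0)) (hF0top : Tendsto F0 atTop (nhds 1))
    (hF0lt : ∀ x, F0 x < 1)
    (hsep0 : ∀ G ∈ A0, BCondition G F0) (hsep1 : ∀ H ∈ A1, BCondition F0 H)
    (α : ℝ) (hα : 0 < α) (hα1 : α < 1)
    (u : ℝ) (hu : gaussianReal 0 1 (Set.Iic u) = ENNReal.ofReal (1 - α))
    (k : ℕ → ℕ) (hk : Tendsto k atTop atTop)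
    (hkn : Tendsto (fun n => (k n : ℝ) / n) atTop (nhds 0)) :
    (∀ F ∈ A0, ∀ (Ω : Type) (_ : MeasurableSpace Ω) (P : Measure Ω), IsProbabilityMeasure P →
      ∀ (X : ℕ → Ω → ℝ), (∀ i, Measurable (X i)) →
        iIndepFun X P →
        (∀ i x, P {ω | X i ω ≤ x} = ENNReal.ofReal (F x)) →
        Tendsto
          (fun n => P {ω | 1 + u / Real.sqrt (k n) < Rstat F0 n (k n) (fun i => X i ω)})
          atTop (nhds 0)) ∧
    (∀ F ∈ A1, ∀ (Ω : Type) (_ : MeasurableSpace Ω) (P : Measure Ω), IsProbabilityMeasure P →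
      ∀ (X : ℕ → Ω → ℝ), (∀ i, Measurable (X i)) →
        iIndepFun X P →
        (∀ i x, P {ω | X i ω ≤ x} = ENNReal.ofReal (F x)) →
        Tendsto
          (fun n => P {ω | 1 + u / Real.sqrt (k n) < Rstat F0 n (k n) (fun i => X i ω)})
          atTop (nhds 1)) :=
  test_significance_and_consistency_general A0 A1 hA0 hA1 F0 hF0lt hsep0 hsep1 u k hk hkn
end

section
/- For all $\varepsilon\in(0,1)$, $c\in(0,1)$ and $x\ge 0$, the inequality $(1+cx)^{\varepsilon}\ge 1+c\varepsilon-c\varepsilon e^{-x}$ holds. -/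
/-- For all `ε ∈ (0,1)`, `c ∈ (0,1)` and `x ≥ 0`, the inequality
`(1 + cx)^ε ≥ 1 + cε - cε e^{-x}` holds, where `(1 + cx)^ε` is the real power. -/
theorem one_add_mul_rpow_ge (ε c x : ℝ)
    (hε : 0 < ε) (hε1 : ε < 1) (hc : 0 < c) (hc1 : c < 1) (hx : 0 ≤ x) :
    1 + c * ε - c * ε * Real.exp (-x) ≤ (1 + c * x) ^ ε := by
  set f : ℝ → ℝ := fun y => (1 + c * y) ^ ε + c * ε * Real.exp (-y) with hf
  -- derivative facts
  have hders : ∀ y : ℝ, 0 ≤ y →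
      HasDerivAt f (c * ε * (1 + c * y) ^ (ε - 1) + c * ε * (Real.exp (-y) * (-1))) y := by
    intro y hy
    have hu : (0:ℝ) < 1 + c * y := by nlinarith
    have h1 : HasDerivAt (fun y : ℝ => (1 + c * y) ^ ε)
        (c * ε * (1 + c * y) ^ (ε - 1)) y := by
      have hb : HasDerivAt (fun y : ℝ => 1 + c * y) c y := by
        simpa using ((hasDerivAt_id y).const_mul c).const_add 1
      exact hb.rpow_const (Or.inl hu.ne')
    have h2 : HasDerivAt (fun y : ℝ => c * ε * Real.exp (-y))
        (c * ε * (Real.exp (-y) * (-1))) y := ((hasDerivAt_neg y).exp).const_mul (c * ε)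
    exact h1.add h2
  have hmono : MonotoneOn f (Set.Ici 0) := by
    apply monotoneOn_of_deriv_nonneg (convex_Ici 0)
    · intro y hy
      exact ((hders y hy).continuousAt).continuousWithinAt
    · intro y hy
      rw [interior_Ici] at hy
      exact ((hders y (le_of_lt hy)).differentiableAt).differentiableWithinAt
    · intro y hy
      rw [interior_Ici] at hy
      have hy' : 0 < y := hy
      rw [((hders y hy'.le).deriv)]
      have hu : (0:ℝ) < 1 + c * y := by nlinarith
      -- need (1+cy)^(ε-1) ≥ exp(-y)
      have hB : (1 + c * y) ^ (1 - ε) ≤ Real.exp y := by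
        have h1 : (1 + c * y) ^ (1 - ε) ≤ 1 + (1 - ε) * (c * y) := by
          have := rpow_one_add_le_one_add_mul_self (s := c * y) (p := 1 - ε)
            (by nlinarith) (by linarith) (by linarith)
          linarith
        have h2 : 1 + (1 - ε) * (c * y) ≤ 1 + y := by nlinarith [mul_nonneg hy'.le (mul_nonneg hc.le hε.le), mul_nonneg hy'.le (sub_nonneg.mpr hc1.le)]
        have h3 : 1 + y ≤ Real.exp y := by have := Real.add_one_le_exp y; linarith
        linarith
      have hkey : Real.exp (-y) ≤ (1 + c * y) ^ (ε - 1) := by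
        rw [Real.exp_neg, show (ε - 1 : ℝ) = -(1 - ε) by ring, Real.rpow_neg hu.le]
        exact inv_anti₀ (Real.rpow_pos_of_pos hu _) hB
      have hpos : (0:ℝ) < c * ε := mul_pos hc hε
      nlinarith [hkey, hpos]
  have := hmono (Set.self_mem_Ici) (Set.mem_Ici.mpr hx) hx
  simp only [hf, mul_zero, add_zero, neg_zero, Real.exp_zero, Real.rpow_natCast] at this
  norm_num at this
  linarith
end
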